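/- Let ℐ be a usual Cantor scheme with J_∅ = [0,1] and let G be a topological group with a topological embedding j : [0,1] → G. For every n ∈ ℕ, the map z_n : [0,1] → G defined by z_n(0) = e and z_n(ξ) = π₋(∂ℐ_{n,ξ}) for ξ ∈ (0,1] is continuous; in particular, z_n(ξ) → e as ξ → 0⁺. -/

import Mathlib

open Set Topology Filter

/-- A usual Cantor scheme, given by the endpoint functions of the intervals
`J_s = [a s, b s]`, indexed by finite binary sequences (lists of booleans),
where `s ++ [false]` is `s⌢0` and `s ++ [true]` is `s⌢1`. -/
structure CantorScheme where
  a : List Bool → ℝ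
  b : List Bool → ℝ
  left_min : ∀ s, a (s ++ [false]) = a s
  right_max : ∀ s, b (s ++ [true]) = b s
  lt1 : ∀ s, a (s ++ [false]) < b (s ++ [false])
  lt2 : ∀ s, b (s ++ [false]) < a (s ++ [true])
  lt3 : ∀ s, a (s ++ [true]) < b (s ++ [true])
  diam_tendsto : ∀ f : ℕ → Bool,
    Filter.Tendsto (fun n => b (List.ofFn fun i : Fin n => f i) - a (List.ofFn fun i : Fin n => f i))
      Filter.atTop (nhds 0)

/-- For `ξ ∈ (0,1]`, the unique `k` with `3^{-(k+1)} < ξ ≤ 3^{-k}`. -/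
noncomputable def scaleIndex (ξ : ℝ) : ℕ := ⌊-Real.logb 3 ξ⌋₊

/-- The piecewise linear map `left_s : [0,1] → J_s` with `left_s 0 = min J_s`,
`left_s (1/3^k) = max J_{s⌢0^{k+1}}`, linear on each `[1/3^{k+1}, 1/3^k]`. -/
noncomputable def CantorScheme.leftMap (C : CantorScheme) (s : List Bool) (ξ : ℝ) : ℝ :=
  if ξ ≤ 0 then C.a s
  else
    let k := scaleIndex ξ
    let x0 : ℝ := (3:ℝ)⁻¹ ^ (k + 1)
    let x1 : ℝ := (3:ℝ)⁻¹ ^ k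
    let y0 := C.b (s ++ List.replicate (k + 2) false)
    let y1 := C.b (s ++ List.replicate (k + 1) false)
    y0 + (ξ - x0) / (x1 - x0) * (y1 - y0)

/-- The piecewise linear map `right_s : [0,1] → J_s` with `right_s 0 = max J_s`,
`right_s (1/3^k) = min J_{s⌢1^{k+1}}`, linear on each `[1/3^{k+1}, 1/3^k]`. -/
noncomputable def CantorScheme.rightMap (C : CantorScheme) (s : List Bool) (ξ : ℝ) : ℝ :=
  if ξ ≤ 0 then C.b s
  else
    let k := scaleIndex ξ
    let x0 : ℝ := (3:ℝ)⁻¹ ^ (k + 1)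
    let x1 : ℝ := (3:ℝ)⁻¹ ^ k
    let y0 := C.a (s ++ List.replicate (k + 2) true)
    let y1 := C.a (s ++ List.replicate (k + 1) true)
    y0 + (ξ - x0) / (x1 - x0) * (y1 - y0)

/-- The set `∂ℐ_{n,ξ}` of endpoints of the intervals
`left_s([0,ξ]) = [min J_s, left_s ξ]` and `right_s([0,ξ]) = [right_s ξ, max J_s]`,
for `s` ranging over binary sequences of length `n`. -/
noncomputable def CantorScheme.boundary (C : CantorScheme) (n : ℕ) (ξ : ℝ) : Finset ℝ :=
  Finset.image
    (fun p : (Fin n → Bool) × Fin 4 =>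
      ![C.a (List.ofFn p.1), C.leftMap (List.ofFn p.1) ξ,
        C.rightMap (List.ofFn p.1) ξ, C.b (List.ofFn p.1)] p.2)
    Finset.univ

/-- Alternating product `j x₁^{±1} j x₂^{∓1} ⋯` along a list, starting with the sign
given by the boolean (`false` = inverse first). -/
def altProd {G : Type*} [Group G] (j : ℝ → G) : Bool → List ℝ → G
  | _, [] => 1
  | sgn, x :: l => (if sgn then j x else (j x)⁻¹) * altProd j (!sgn) l

/-- `π₋(X) = j x₁⁻¹ · j x₂ · j x₃⁻¹ ⋯` where `x₁ < x₂ < ⋯` enumerates the finite set `X`. -/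
noncomputable def piMinus {G : Type*} [Group G] (j : ℝ → G) (X : Finset ℝ) : G :=
  altProd j false (X.sort (· ≤ ·))

/-- The map `z_n : [0,1] → G`, `z_n 0 = e`, `z_n ξ = π₋(∂ℐ_{n,ξ})` for `ξ > 0`. -/
noncomputable def CantorScheme.z {G : Type*} [Group G] (C : CantorScheme) (j : ℝ → G)
    (n : ℕ) (ξ : ℝ) : G :=
  if ξ ≤ 0 then 1 else piMinus j (C.boundary n ξ)

/-- `j` is a functorial embedding of `[0,1]` into the topological group `G`:
a topological embedding of `[0,1]` such that every autohomeomorphism `h` of `[0,1]`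
extends to a continuous group homomorphism `H : G → G` with `H ∘ j = j ∘ h`. -/
def FunctorialEmbedding {G : Type*} [Group G] [TopologicalSpace G] (j : ℝ → G) : Prop :=
  Topology.IsEmbedding ((Set.Icc (0:ℝ) 1).restrict j) ∧
  ∀ h : Set.Icc (0:ℝ) 1 ≃ₜ Set.Icc (0:ℝ) 1,
    ∃ H : G →* G, Continuous H ∧ ∀ x : Set.Icc (0:ℝ) 1, H (j x) = j (h x)

/-!
For `ξ ∈ (0,1]` the points of `∂ℐ_{n,ξ}` are, in increasing order,
`min J_s < left_s ξ < right_s ξ < max J_s` with `s` running through the binary words of length `n`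
in lexicographic order. Hence `z_n ξ` is the product over `s` of
`j (min J_s)⁻¹ j (left_s ξ) j (right_s ξ)⁻¹ j (max J_s)`. This expression is continuous on `[0,1]`:
`left_s` and `right_s` are piecewise linear on `(0,1]`, and they tend to `min J_s` and `max J_s`
at `0` because the intervals shrink along the branches `s⌢000⋯` and `s⌢111⋯`. At `ξ = 0` every
factor is `e`.
-/

lemma inv_three_pow_succ_lt (k : ℕ) : (3:ℝ)⁻¹ ^ (k + 1) < (3:ℝ)⁻¹ ^ k :=
  pow_lt_pow_right_of_lt_one₀ (by norm_num) (by norm_num) k.lt_succ_self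

lemma three_rpow_neg_natCast (k : ℕ) : (3:ℝ) ^ (-(k:ℝ)) = (3:ℝ)⁻¹ ^ k := by
  rw [Real.rpow_neg (by norm_num), Real.rpow_natCast, inv_pow]

lemma le_scaleIndex {ξ : ℝ} {m : ℕ} (h0 : 0 < ξ) (h : ξ ≤ (3:ℝ)⁻¹ ^ m) : m ≤ scaleIndex ξ := by
  apply Nat.le_floor
  have := (Real.logb_le_iff_le_rpow (by norm_num : (1:ℝ) < 3) h0).mpr
    (by rwa [three_rpow_neg_natCast])
  linarith

lemma scaleIndex_le {ξ : ℝ} {k : ℕ} (h : (3:ℝ)⁻¹ ^ (k + 1) < ξ) : scaleIndex ξ ≤ k := by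
  have h0 : 0 < ξ := (pow_pos (by norm_num) _).trans h
  apply Nat.lt_succ_iff.mp ((Nat.floor_lt' k.succ_ne_zero).mpr _)
  have := (Real.lt_logb_iff_rpow_lt (by norm_num : (1:ℝ) < 3) h0).mpr
    (by rwa [three_rpow_neg_natCast])
  push_cast at this ⊢
  linarith

lemma scaleIndex_eq {ξ : ℝ} {k : ℕ} (hl : (3:ℝ)⁻¹ ^ (k + 1) < ξ) (hu : ξ ≤ (3:ℝ)⁻¹ ^ k) :
    scaleIndex ξ = k :=
  le_antisymm (scaleIndex_le hl)
    (le_scaleIndex ((pow_pos (by norm_num) _).trans hl) hu)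

lemma scaleIndex_spec {ξ : ℝ} (hξ : ξ ∈ Ioc (0:ℝ) 1) :
    (3:ℝ)⁻¹ ^ (scaleIndex ξ + 1) < ξ ∧ ξ ≤ (3:ℝ)⁻¹ ^ scaleIndex ξ := by
  have hlog : 0 ≤ -Real.logb 3 ξ := neg_nonneg.mpr (Real.logb_nonpos (by norm_num) hξ.1.le hξ.2)
  constructor
  · have h := Nat.lt_floor_add_one (-Real.logb 3 ξ)
    rw [← three_rpow_neg_natCast]
    refine (Real.lt_logb_iff_rpow_lt (by norm_num) hξ.1).mp ?_
    push_cast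
    rw [scaleIndex] at *
    linarith
  · have h := Nat.floor_le hlog
    rw [← three_rpow_neg_natCast]
    refine (Real.logb_le_iff_le_rpow (by norm_num) hξ.1).mp ?_
    rw [scaleIndex] at *
    linarith

lemma tendsto_scaleIndex_nhdsGT_zero : Tendsto scaleIndex (𝓝[>] (0:ℝ)) atTop := by
  refine tendsto_atTop.mpr fun m => ?_
  filter_upwards [nhdsWithin_le_nhds (Iic_mem_nhds (pow_pos (by norm_num : (0:ℝ) < 3⁻¹) m)),
    self_mem_nhdsWithin] with ξ hξ h0
  exact le_scaleIndex h0 hξ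

noncomputable def triadicAffine (g : ℕ → ℝ) (k : ℕ) (ξ : ℝ) : ℝ :=
  g (k + 1) + (ξ - (3:ℝ)⁻¹ ^ (k + 1)) / ((3:ℝ)⁻¹ ^ k - (3:ℝ)⁻¹ ^ (k + 1)) * (g k - g (k + 1))

/-- The piecewise linear interpolation of the values `g k` at the nodes `3⁻¹ ^ k`. -/
noncomputable def triadicInterp (L : ℝ) (g : ℕ → ℝ) (ξ : ℝ) : ℝ :=
  if ξ ≤ 0 then L else triadicAffine g (scaleIndex ξ) ξ

section TriadicInterp

variable {L : ℝ} {g : ℕ → ℝ}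

lemma continuous_triadicAffine (g : ℕ → ℝ) (k : ℕ) : Continuous (triadicAffine g k) := by
  unfold triadicAffine
  fun_prop

lemma triadicAffine_inv_three_pow (g : ℕ → ℝ) (k : ℕ) :
    triadicAffine g k ((3:ℝ)⁻¹ ^ k) = g k := by
  rw [triadicAffine, div_self (sub_ne_zero.mpr (inv_three_pow_succ_lt k).ne'), one_mul]
  ring

lemma triadicAffine_inv_three_pow_succ (g : ℕ → ℝ) (k : ℕ) :
    triadicAffine g k ((3:ℝ)⁻¹ ^ (k + 1)) = g (k + 1) := by
  simp [triadicAffine]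

lemma triadicAffine_mem_uIcc {k : ℕ} {ξ : ℝ} (hl : (3:ℝ)⁻¹ ^ (k + 1) ≤ ξ)
    (hu : ξ ≤ (3:ℝ)⁻¹ ^ k) : triadicAffine g k ξ ∈ uIcc (g (k + 1)) (g k) := by
  have hd : 0 < (3:ℝ)⁻¹ ^ k - (3:ℝ)⁻¹ ^ (k + 1) := sub_pos.mpr (inv_three_pow_succ_lt k)
  rw [triadicAffine]
  set t := (ξ - (3:ℝ)⁻¹ ^ (k + 1)) / ((3:ℝ)⁻¹ ^ k - (3:ℝ)⁻¹ ^ (k + 1))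
  have ht0 : 0 ≤ t := div_nonneg (by linarith) hd.le
  have ht1 : t ≤ 1 := (div_le_one hd).mpr (by linarith)
  rcases le_total (g (k + 1)) (g k) with h | h
  · rw [uIcc_of_le h]; constructor <;> nlinarith
  · rw [uIcc_of_ge h]; constructor <;> nlinarith

lemma triadicInterp_of_pos {ξ : ℝ} (hξ : 0 < ξ) :
    triadicInterp L g ξ = triadicAffine g (scaleIndex ξ) ξ :=
  if_neg hξ.not_ge

lemma triadicInterp_mem {S : Set ℝ} (hS : S.OrdConnected) (hg : ∀ m, g m ∈ S) {ξ : ℝ}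
    (hξ : ξ ∈ Ioc (0:ℝ) 1) : triadicInterp L g ξ ∈ S := by
  obtain ⟨hl, hu⟩ := scaleIndex_spec hξ
  rw [triadicInterp_of_pos hξ.1]
  exact hS.uIcc_subset (hg _) (hg _) (triadicAffine_mem_uIcc hl.le hu)

lemma triadicInterp_eqOn_triadicAffine (k : ℕ) :
    EqOn (triadicInterp L g) (triadicAffine g k) (Icc ((3:ℝ)⁻¹ ^ (k + 1)) ((3:ℝ)⁻¹ ^ k)) := by
  intro ξ ⟨hl, hu⟩
  rw [triadicInterp_of_pos ((pow_pos (by norm_num) _).trans_le hl)]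
  rcases hl.eq_or_lt with rfl | hl
  -- at the node `3⁻¹ ^ (k + 1)` the next piece is in force; both pieces take the value `g (k + 1)`
  · rw [scaleIndex_eq (inv_three_pow_succ_lt (k + 1)) le_rfl, triadicAffine_inv_three_pow,
      triadicAffine_inv_three_pow_succ]
  · rw [scaleIndex_eq hl hu]

lemma continuousOn_triadicInterp_Icc_inv_three_pow (L : ℝ) (g : ℕ → ℝ) (k : ℕ) :
    ContinuousOn (triadicInterp L g) (Icc ((3:ℝ)⁻¹ ^ (k + 1)) 1) := by
  induction k with
  | zero =>
    simpa using ((continuous_triadicAffine g 0).continuousOn).congr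
      (triadicInterp_eqOn_triadicAffine (L := L) 0)
  | succ k ih =>
    rw [← Icc_union_Icc_eq_Icc (inv_three_pow_succ_lt (k + 1)).le
      (pow_le_one₀ (by norm_num) (by norm_num))]
    exact ((continuous_triadicAffine g (k + 1)).continuousOn.congr
      (triadicInterp_eqOn_triadicAffine (k + 1))).union_of_isClosed ih isClosed_Icc isClosed_Icc

lemma tendsto_triadicInterp_nhdsGT_zero (hg : Tendsto g atTop (𝓝 L)) :
    Tendsto (triadicInterp L g) (𝓝[>] 0) (𝓝 L) := by
  have hk := tendsto_scaleIndex_nhdsGT_zero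
  have hk1 := (tendsto_add_atTop_nat 1).comp hk
  have hmin := (hg.comp hk1).min (hg.comp hk)
  have hmax := (hg.comp hk1).max (hg.comp hk)
  rw [min_self] at hmin
  rw [max_self] at hmax
  have hmem : ∀ᶠ ξ in 𝓝[>] (0:ℝ), triadicInterp L g ξ ∈
      uIcc (g (scaleIndex ξ + 1)) (g (scaleIndex ξ)) := by
    filter_upwards [Ioo_mem_nhdsGT (zero_lt_one' ℝ)] with ξ hξ
    obtain ⟨hl, hu⟩ := scaleIndex_spec ⟨hξ.1, hξ.2.le⟩
    rw [triadicInterp_of_pos hξ.1]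
    exact triadicAffine_mem_uIcc hl.le hu
  exact tendsto_of_tendsto_of_tendsto_of_le_of_le' hmin hmax
    (hmem.mono fun ξ h => h.1) (hmem.mono fun ξ h => h.2)

lemma continuousOn_triadicInterp (hg : Tendsto g atTop (𝓝 L)) :
    ContinuousOn (triadicInterp L g) (Icc 0 1) := by
  rintro ξ ⟨h0, h1⟩
  rcases h0.eq_or_lt with rfl | hpos
  · rw [← Ioc_insert_left zero_le_one, continuousWithinAt_insert_self, ContinuousWithinAt,
      nhdsWithin_Ioc_eq_nhdsGT zero_lt_one, triadicInterp, if_pos le_rfl]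
    exact tendsto_triadicInterp_nhdsGT_zero hg
  · obtain ⟨hl, -⟩ := scaleIndex_spec ⟨hpos, h1⟩
    refine ((continuousOn_triadicInterp_Icc_inv_three_pow L g (scaleIndex ξ)) ξ
      ⟨hl.le, h1⟩).mono_of_mem_nhdsWithin ?_
    exact mem_nhdsWithin.mpr ⟨Ioi _, isOpen_Ioi, hl, fun x hx => ⟨hx.1.le, hx.2.2⟩⟩

end TriadicInterp

namespace CantorScheme

variable (C : CantorScheme)

lemma a_lt_b (s : List Bool) : C.a s < C.b s := by
  induction s using List.reverseRecOn with
  | nil => linarith [C.lt1 [], C.lt2 [], C.lt3 [], C.left_min [], C.right_max []]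
  | append_singleton s x _ => cases x; exacts [C.lt1 s, C.lt3 s]

lemma a_le_a_concat (s : List Bool) (x : Bool) : C.a s ≤ C.a (s ++ [x]) := by
  cases x
  · exact (C.left_min s).ge
  · linarith [C.lt1 s, C.lt2 s, C.left_min s]

lemma b_concat_le_b (s : List Bool) (x : Bool) : C.b (s ++ [x]) ≤ C.b s := by
  cases x
  · linarith [C.lt2 s, C.lt3 s, C.right_max s]
  · exact (C.right_max s).le

lemma a_le_a_append (s t : List Bool) : C.a s ≤ C.a (s ++ t) := by
  induction t using List.reverseRecOn with
  | nil => simp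
  | append_singleton t x ih =>
    rw [← List.append_assoc]
    exact ih.trans (C.a_le_a_concat _ x)

lemma b_append_le_b (s t : List Bool) : C.b (s ++ t) ≤ C.b s := by
  induction t using List.reverseRecOn with
  | nil => simp
  | append_singleton t x ih =>
    rw [← List.append_assoc]
    exact (C.b_concat_le_b _ x).trans ih

lemma a_append_replicate_false (s : List Bool) (m : ℕ) :
    C.a (s ++ List.replicate m false) = C.a s := by
  induction m with
  | zero => simp
  | succ m ih => rw [List.replicate_succ', ← List.append_assoc, C.left_min, ih]

lemma b_append_replicate_true (s : List Bool) (m : ℕ) :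
    C.b (s ++ List.replicate m true) = C.b s := by
  induction m with
  | zero => simp
  | succ m ih => rw [List.replicate_succ', ← List.append_assoc, C.right_max, ih]

lemma tendsto_diam_append_replicate (s : List Bool) (x : Bool) :
    Tendsto (fun m => C.b (s ++ List.replicate m x) - C.a (s ++ List.replicate m x))
      atTop (𝓝 0) := by
  have hprefix : ∀ m, (List.ofFn fun i : Fin (s.length + m) => s.getD i x) =
      s ++ List.replicate m x := by
    intro m
    refine List.ext_getElem (by simp) fun i h₁ h₂ => ?_
    simp only [List.getElem_ofFn, List.getElem_append, List.getElem_replicate]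
    split_ifs with h
    · simp [h]
    · simp [List.getElem?_eq_none (not_lt.mp h)]
  have h := (C.diam_tendsto fun i => s.getD i x).comp (tendsto_add_atTop_nat s.length)
  simpa only [Function.comp_def, Nat.add_comm _ s.length, hprefix] using h

lemma tendsto_b_append_replicate_false (s : List Bool) :
    Tendsto (fun m => C.b (s ++ List.replicate (m + 1) false)) atTop (𝓝 (C.a s)) := by
  have h := ((C.tendsto_diam_append_replicate s false).comp (tendsto_add_atTop_nat 1)).add_const
    (C.a s)
  simpa [Function.comp_def, C.a_append_replicate_false] using h

lemma tendsto_a_append_replicate_true (s : List Bool) :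
    Tendsto (fun m => C.a (s ++ List.replicate (m + 1) true)) atTop (𝓝 (C.b s)) := by
  have h := ((C.tendsto_diam_append_replicate s true).comp (tendsto_add_atTop_nat 1)).const_sub
    (C.b s)
  simpa [Function.comp_def, C.b_append_replicate_true] using h

lemma leftMap_eq_triadicInterp (s : List Bool) :
    C.leftMap s = triadicInterp (C.a s) fun m => C.b (s ++ List.replicate (m + 1) false) :=
  rfl

lemma rightMap_eq_triadicInterp (s : List Bool) :
    C.rightMap s = triadicInterp (C.b s) fun m => C.a (s ++ List.replicate (m + 1) true) :=
  rfl

lemma continuousOn_leftMap (s : List Bool) : ContinuousOn (C.leftMap s) (Icc 0 1) := by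
  rw [leftMap_eq_triadicInterp]
  exact continuousOn_triadicInterp (C.tendsto_b_append_replicate_false s)

lemma continuousOn_rightMap (s : List Bool) : ContinuousOn (C.rightMap s) (Icc 0 1) := by
  rw [rightMap_eq_triadicInterp]
  exact continuousOn_triadicInterp (C.tendsto_a_append_replicate_true s)

lemma append_replicate_succ (s : List Bool) (x : Bool) (m : ℕ) :
    s ++ List.replicate (m + 1) x = (s ++ [x]) ++ List.replicate m x := by
  rw [List.replicate_succ, List.append_assoc, List.singleton_append]

lemma leftMap_mem_Ioc {ξ : ℝ} (hξ : ξ ∈ Ioc (0:ℝ) 1) (s : List Bool) :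
    C.leftMap s ξ ∈ Ioc (C.a s) (C.b (s ++ [false])) := by
  rw [leftMap_eq_triadicInterp]
  refine triadicInterp_mem ordConnected_Ioc (fun m => ⟨?_, ?_⟩) hξ
  · simpa only [C.a_append_replicate_false] using C.a_lt_b (s ++ List.replicate (m + 1) false)
  · rw [append_replicate_succ]
    exact C.b_append_le_b _ _

lemma rightMap_mem_Ico {ξ : ℝ} (hξ : ξ ∈ Ioc (0:ℝ) 1) (s : List Bool) :
    C.rightMap s ξ ∈ Ico (C.a (s ++ [true])) (C.b s) := by
  rw [rightMap_eq_triadicInterp]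
  refine triadicInterp_mem ordConnected_Ico (fun m => ⟨?_, ?_⟩) hξ
  · rw [append_replicate_succ]
    exact C.a_le_a_append _ _
  · simpa only [C.b_append_replicate_true] using C.a_lt_b (s ++ List.replicate (m + 1) true)

lemma leftMap_lt_rightMap {ξ : ℝ} (hξ : ξ ∈ Ioc (0:ℝ) 1) (s : List Bool) :
    C.leftMap s ξ < C.rightMap s ξ :=
  ((C.leftMap_mem_Ioc hξ s).2.trans_lt (C.lt2 s)).trans_le (C.rightMap_mem_Ico hξ s).1

lemma mem_Icc_nil {x : ℝ} {s : List Bool} (hx : x ∈ Icc (C.a s) (C.b s)) :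
    x ∈ Icc (C.a []) (C.b []) :=
  ⟨(C.a_le_a_append [] s).trans hx.1, hx.2.trans (C.b_append_le_b [] s)⟩

lemma leftMap_mem_Icc {ξ : ℝ} (hξ : ξ ≤ 1) (s : List Bool) :
    C.leftMap s ξ ∈ Icc (C.a s) (C.b s) := by
  rcases le_or_gt ξ 0 with h0 | h0
  · rw [leftMap, if_pos h0]
    exact ⟨le_rfl, (C.a_lt_b s).le⟩
  · obtain ⟨hl, hu⟩ := C.leftMap_mem_Ioc ⟨h0, hξ⟩ s
    exact ⟨hl.le, hu.trans (C.b_concat_le_b s false)⟩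

lemma rightMap_mem_Icc {ξ : ℝ} (hξ : ξ ≤ 1) (s : List Bool) :
    C.rightMap s ξ ∈ Icc (C.a s) (C.b s) := by
  rcases le_or_gt ξ 0 with h0 | h0
  · rw [rightMap, if_pos h0]
    exact ⟨(C.a_lt_b s).le, le_rfl⟩
  · obtain ⟨hl, hu⟩ := C.rightMap_mem_Ico ⟨h0, hξ⟩ s
    exact ⟨(C.a_le_a_concat s true).trans hl, hu.le⟩

end CantorScheme

/-- The binary words of length `n` in lexicographic order, which is the left-to-right order
of the intervals `J_s`. -/
def binaryWords : ℕ → List (List Bool)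
  | 0 => [[]]
  | n + 1 => (binaryWords n).flatMap fun s => [s ++ [false], s ++ [true]]

lemma mem_binaryWords_iff {n : ℕ} {s : List Bool} :
    s ∈ binaryWords n ↔ ∃ f : Fin n → Bool, s = List.ofFn f := by
  induction n generalizing s with
  | zero => simp [binaryWords]
  | succ n ih =>
    simp only [binaryWords, List.mem_flatMap, List.mem_cons, List.not_mem_nil, or_false, ih]
    constructor
    · rintro ⟨_, ⟨f, rfl⟩, rfl | rfl⟩
      exacts [⟨Fin.snoc f false, by rw [List.ofFn_succ']; simp⟩,
        ⟨Fin.snoc f true, by rw [List.ofFn_succ']; simp⟩]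
    · rintro ⟨f, rfl⟩
      refine ⟨_, ⟨fun i => f i.castSucc, rfl⟩, ?_⟩
      rw [List.ofFn_succ', List.concat_eq_append]
      cases f (Fin.last n) <;> simp

namespace CantorScheme

variable (C : CantorScheme)

lemma pairwise_b_lt_a_binaryWords (n : ℕ) :
    (binaryWords n).Pairwise fun s t => C.b s < C.a t := by
  induction n with
  | zero => simp [binaryWords]
  | succ n ih =>
    rw [binaryWords, List.pairwise_flatMap]
    refine ⟨fun s _ => by simpa using C.lt2 s, ih.imp fun {s t} hst x hx y hy => ?_⟩
    simp only [List.mem_cons, List.not_mem_nil, or_false] at hx hy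
    have hx' : C.b x ≤ C.b s := by rcases hx with rfl | rfl <;> exact C.b_concat_le_b _ _
    have hy' : C.a t ≤ C.a y := by rcases hy with rfl | rfl <;> exact C.a_le_a_concat _ _
    linarith

/-- The endpoints of `left_s([0,ξ])` and `right_s([0,ξ])`, in increasing order. -/
noncomputable def quad (ξ : ℝ) (s : List Bool) : List ℝ :=
  [C.a s, C.leftMap s ξ, C.rightMap s ξ, C.b s]

lemma pairwise_lt_flatMap_quad {ξ : ℝ} (hξ : ξ ∈ Ioc (0:ℝ) 1) (n : ℕ) :
    ((binaryWords n).flatMap (C.quad ξ)).Pairwise (· < ·) := by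
  have h := fun s => (C.leftMap_mem_Ioc hξ s).1
  have h' := fun s => C.leftMap_lt_rightMap hξ s
  have h'' := fun s => (C.rightMap_mem_Ico hξ s).2
  rw [List.pairwise_flatMap]
  refine ⟨fun s _ => ?_, (C.pairwise_b_lt_a_binaryWords n).imp fun {s t} hst x hx y hy => ?_⟩
  · simp only [quad, List.pairwise_cons, List.mem_cons, List.not_mem_nil, or_false,
      forall_eq_or_imp, forall_eq, false_imp_iff, implies_true, List.Pairwise.nil, and_true]
    refine ⟨⟨h s, ?_, ?_⟩, ⟨h' s, ?_⟩, h'' s⟩ <;> linarith [h s, h' s, h'' s]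
  · simp only [quad, List.mem_cons, List.not_mem_nil, or_false] at hx hy
    rcases hx with rfl | rfl | rfl | rfl <;> rcases hy with rfl | rfl | rfl | rfl <;>
      linarith [h s, h' s, h'' s, h t, h' t, h'' t]

lemma boundary_eq_toFinset (n : ℕ) (ξ : ℝ) :
    C.boundary n ξ = ((binaryWords n).flatMap (C.quad ξ)).toFinset := by
  ext x
  simp only [boundary, Finset.mem_image, Finset.mem_univ, true_and, List.mem_toFinset,
    List.mem_flatMap, mem_binaryWords_iff, quad, List.mem_cons,
    List.not_mem_nil, or_false]
  constructor
  · rintro ⟨⟨f, i⟩, rfl⟩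
    refine ⟨List.ofFn f, ⟨f, rfl⟩, ?_⟩
    fin_cases i <;> simp
  · rintro ⟨s, ⟨f, rfl⟩, rfl | rfl | rfl | rfl⟩
    exacts [⟨⟨f, 0⟩, rfl⟩, ⟨⟨f, 1⟩, rfl⟩, ⟨⟨f, 2⟩, rfl⟩, ⟨⟨f, 3⟩, rfl⟩]

lemma sort_boundary {ξ : ℝ} (hξ : ξ ∈ Ioc (0:ℝ) 1) (n : ℕ) :
    (C.boundary n ξ).sort (· ≤ ·) = (binaryWords n).flatMap (C.quad ξ) := by
  have hs := C.pairwise_lt_flatMap_quad hξ n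
  rw [C.boundary_eq_toFinset, List.toFinset_sort _ (hs.imp ne_of_lt)]
  exact hs.imp le_of_lt

end CantorScheme

section AltProd

variable {G : Type*} [Group G] (j : ℝ → G)

lemma altProd_append_of_even :
    ∀ (sgn : Bool) (l₁ l₂ : List ℝ), Even l₁.length →
      altProd j sgn (l₁ ++ l₂) = altProd j sgn l₁ * altProd j sgn l₂
  | _, [], _, _ => by simp [altProd]
  | _, [_], _, h => absurd h (by simp)
  | sgn, x :: y :: l₁, l₂, h => by
    have h' : Even l₁.length := by simpa [Nat.even_add_one] using h
    simp [altProd, mul_assoc, altProd_append_of_even sgn l₁ l₂ h']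

lemma altProd_flatMap {ι : Type*} (sgn : Bool) (f : ι → List ℝ)
    (hf : ∀ i, Even (f i).length) :
    ∀ l : List ι, altProd j sgn (l.flatMap f) = (l.map fun i => altProd j sgn (f i)).prod
  | [] => rfl
  | i :: l => by
    rw [List.flatMap_cons, altProd_append_of_even j sgn _ _ (hf i), altProd_flatMap sgn f hf l]
    rfl

end AltProd

namespace CantorScheme

variable {G : Type*} [Group G] (C : CantorScheme) (j : ℝ → G) (n : ℕ)

lemma z_eqOn_prod_altProd_quad :
    EqOn (C.z j n) (fun ξ => ((binaryWords n).map fun s => altProd j false (C.quad ξ s)).prod)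
      (Icc 0 1) := by
  rintro ξ ⟨h0, h1⟩
  rcases h0.eq_or_lt with rfl | hpos
  · simp [z, quad, leftMap, rightMap, altProd]
  · rw [z, if_neg hpos.not_ge, piMinus, C.sort_boundary ⟨hpos, h1⟩,
      altProd_flatMap j false _ fun s => ⟨2, rfl⟩]

lemma continuousOn_z [TopologicalSpace G] [IsTopologicalGroup G]
    (hj : ContinuousOn j (Icc (C.a []) (C.b []))) : ContinuousOn (C.z j n) (Icc 0 1) := by
  refine ContinuousOn.congr ?_ (C.z_eqOn_prod_altProd_quad j n)
  refine continuousOn_list_prod _ fun s _ => ?_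
  have hl : ContinuousOn (fun ξ => j (C.leftMap s ξ)) (Icc 0 1) :=
    hj.comp (C.continuousOn_leftMap s) fun ξ hξ => C.mem_Icc_nil (C.leftMap_mem_Icc hξ.2 s)
  have hr : ContinuousOn (fun ξ => j (C.rightMap s ξ)) (Icc 0 1) :=
    hj.comp (C.continuousOn_rightMap s) fun ξ hξ => C.mem_Icc_nil (C.rightMap_mem_Icc hξ.2 s)
  simp only [quad, altProd, Bool.not_false, Bool.not_true, mul_one]
  exact continuousOn_const.mul (hl.mul (hr.inv.mul continuousOn_const))

end CantorScheme

/-- If `j : [0,1] → G` is a topological embedding and `ℐ` is a usual Cantor scheme with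
`J_∅ = [0,1]`, then each `z_n` is continuous on `[0,1]`; in particular
`z_n ξ → e` as `ξ → 0⁺`. -/
theorem stmt7 {G : Type*} [Group G] [TopologicalSpace G] [IsTopologicalGroup G]
    (j : ℝ → G) (hj : Topology.IsEmbedding ((Set.Icc (0:ℝ) 1).restrict j))
    (C : CantorScheme) (h0 : C.a [] = 0) (h1 : C.b [] = 1) (n : ℕ) :
    ContinuousOn (C.z j n) (Set.Icc (0:ℝ) 1) ∧
    Filter.Tendsto (C.z j n) (nhdsWithin 0 (Set.Ioi 0)) (nhds (1 : G)) := by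
  have hjc : ContinuousOn j (Icc (C.a []) (C.b [])) := by
    rw [h0, h1]
    exact continuousOn_iff_continuous_domRestrict.mpr hj.continuous
  have hz := C.continuousOn_z j n hjc
  have hz0 : Tendsto (C.z j n) (𝓝[Icc 0 1] 0) (𝓝 1) := by
    have h := hz 0 ⟨le_rfl, zero_le_one⟩
    rwa [ContinuousWithinAt, show C.z j n 0 = 1 from if_pos le_rfl] at h
  refine ⟨hz, hz0.mono_left ?_⟩
  rw [← nhdsWithin_Ioc_eq_nhdsGT zero_lt_one]
  exact nhdsWithin_mono _ Ioc_subset_Icc_self
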